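/- arXiv:1101.2395 — 6 statements merged into one kernel-verified Lean document; each statement's English description precedes it below -/
import Mathlib

section
/- If A is a nonnegative operator on a finite-dimensional real inner product space (i.e., (Ax, x) ≥ 0 for all x), then for any τ > 0 and σ ≥ 1/2, the transition operator S = (I + στA)⁻¹(I − (1−σ)τA) satisfies ‖S‖ ≤ 1 in the operator norm. -/
open RealInnerProductSpace ContinuousLinearMap

theorem stmt0 {E : Type*} [NormedAddCommGroup E] [InnerProductSpace ℝ E]
    [FiniteDimensional ℝ E]
    (A : E →L[ℝ] E) (hA : ∀ x : E, 0 ≤ ⟪A x, x⟫)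
    (τ σ : ℝ) (hτ : 0 < τ) (hσ : 1/2 ≤ σ) :
    ‖Ring.inverse (1 + (σ * τ) • A) * (1 - ((1 - σ) * τ) • A)‖ ≤ 1 := by
  set B : E →L[ℝ] E := 1 + (σ * τ) • A with hB
  set C : E →L[ℝ] E := 1 - ((1 - σ) * τ) • A with hC
  have hστ : 0 ≤ σ * τ := by nlinarith
  -- B is injective
  have hinj : Function.Injective B := by
    rw [← ContinuousLinearMap.coe_coe, ← LinearMap.ker_eq_bot,
      LinearMap.ker_eq_bot']
    intro y hy
    have hy' : B y = 0 := hy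
    have h1 : ⟪B y, y⟫ = 0 := by rw [hy']; simp
    have h2 : ⟪B y, y⟫ = ‖y‖^2 + (σ * τ) * ⟪A y, y⟫ := by
      simp [hB, ContinuousLinearMap.add_apply, inner_add_left, inner_smul_left,
        real_inner_self_eq_norm_sq]
    have := hA y
    have hn : ‖y‖^2 ≤ 0 := by nlinarith
    have : ‖y‖ = 0 := by nlinarith [sq_nonneg ‖y‖, norm_nonneg y]
    simpa using this
  have hsurj : Function.Surjective B :=
    LinearMap.injective_iff_surjective.mp hinj
  -- B is a unit
  let e : E ≃L[ℝ] E :=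
    { (LinearEquiv.ofBijective (B : E →ₗ[ℝ] E) ⟨hinj, hsurj⟩) with
      continuous_toFun := B.continuous
      continuous_invFun := by
        exact (LinearEquiv.ofBijective (B : E →ₗ[ℝ] E)
          ⟨hinj, hsurj⟩).symm.toLinearMap.continuous_of_finiteDimensional }
  have hBe : (e : E →L[ℝ] E) = B := by ext x; rfl
  let u : (E →L[ℝ] E)ˣ :=
    ⟨B, e.symm, by ext x; simp [← hBe], by ext x; simp [← hBe]⟩
  have hinv : Ring.inverse B = (e.symm : E →L[ℝ] E) := by
    have : Ring.inverse (u : E →L[ℝ] E) = ((u⁻¹ : _ˣ) : E →L[ℝ] E) :=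
      Ring.inverse_unit u
    simpa [u] using this
  -- key inequality
  have key : ∀ y : E, ‖C y‖ ≤ ‖B y‖ := by
    intro y
    rw [← Real.sqrt_sq (norm_nonneg (C y)), ← Real.sqrt_sq (norm_nonneg (B y))]
    apply Real.sqrt_le_sqrt
    have hCy : C y = y - ((1 - σ) * τ) • A y := by
      simp [hC, ContinuousLinearMap.sub_apply]
    have hBy : B y = y + (σ * τ) • A y := by
      simp [hB, ContinuousLinearMap.add_apply]
    rw [hCy, hBy, ← real_inner_self_eq_norm_sq, ← real_inner_self_eq_norm_sq]
    rw [real_inner_sub_sub_self, real_inner_add_add_self]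
    simp only [real_inner_smul_left, real_inner_smul_right]
    have h1 := hA y
    have h2 : ⟪y, A y⟫ = ⟪A y, y⟫ := real_inner_comm _ _
    have hn : (0:ℝ) ≤ ⟪A y, A y⟫ := real_inner_self_nonneg
    nlinarith [mul_nonneg (mul_nonneg (sq_nonneg τ) (by linarith : (0:ℝ) ≤ 2*σ-1)) hn,
      mul_nonneg hτ.le h1, sq_nonneg τ]
  -- conclude
  apply ContinuousLinearMap.opNorm_le_bound _ zero_le_one
  intro x
  rw [one_mul]
  have hx : (Ring.inverse B * C) x = C (e.symm x) := by
    have hcomm : B.comp C = C.comp B := by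
      ext x
      simp only [hB, hC, ContinuousLinearMap.comp_apply,
        ContinuousLinearMap.add_apply, ContinuousLinearMap.sub_apply,
        ContinuousLinearMap.smul_apply, ContinuousLinearMap.one_apply,
        map_add, map_sub, map_smul]
      module
    have : B (C (e.symm x)) = C x := by
      have h3 : B (C (e.symm x)) = C (B (e.symm x)) := by
        have := congrFun (congrArg DFunLike.coe hcomm) (e.symm x)
        simpa using this
      rw [h3]
      congr 1
      have : B (e.symm x) = e (e.symm x) := by rw [← hBe]; rfl
      rw [this, e.apply_symm_apply]
    calc (Ring.inverse B * C) x = Ring.inverse B (C x) := rfl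
      _ = e.symm (C x) := by rw [hinv]; rfl
      _ = e.symm (B (C (e.symm x))) := by rw [this]
      _ = e.symm (e (C (e.symm x))) := by rw [← hBe]; rfl
      _ = C (e.symm x) := e.symm_apply_apply _
  rw [hx]
  calc ‖C (e.symm x)‖ ≤ ‖B (e.symm x)‖ := key _
    _ = ‖x‖ := by
        congr 1
        have : B (e.symm x) = e (e.symm x) := by rw [← hBe]; rfl
        rw [this, e.apply_symm_apply]
end

section
/- Let A be nonnegative on a finite-dimensional real inner product space and σ ≥ 1/2. If the sequence (yⁿ) satisfies the implicit scheme (yⁿ⁺¹ − yⁿ)/τ + A(σyⁿ⁺¹ + (1−σ)yⁿ) = φⁿ for all n, then the a priori estimate ‖yⁿ⁺¹‖ ≤ ‖yⁿ‖ + τ‖φⁿ‖ holds for every n. -/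
open RealInnerProductSpace

private lemma aux_norm_le {E : Type*} [NormedAddCommGroup E] [InnerProductSpace ℝ E]
    (A : E →L[ℝ] E) (hA : ∀ x : E, 0 ≤ ⟪A x, x⟫) {a : ℝ} (ha : 0 ≤ a) (x : E) :
    ‖x‖ ≤ ‖x + a • A x‖ := by
  have h2 : ‖x + a • A x‖ ^ 2 = ‖x‖ ^ 2 + 2 * (a * ⟪A x, x⟫) + ‖a • A x‖ ^ 2 := by
    rw [norm_add_sq_real, real_inner_smul_right, real_inner_comm]
  nlinarith [hA x, norm_nonneg x, norm_nonneg (x + a • A x), sq_nonneg ‖a • A x‖]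

private lemma aux_contract {E : Type*} [NormedAddCommGroup E] [InnerProductSpace ℝ E]
    (A : E →L[ℝ] E) (hA : ∀ x : E, 0 ≤ ⟪A x, x⟫) {a b : ℝ} (hab : 0 < a + b)
    (hab2 : b ^ 2 ≤ a ^ 2) (x : E) :
    ‖x - b • A x‖ ≤ ‖x + a • A x‖ := by
  have h1 : ‖x + a • A x‖ ^ 2 = ‖x‖ ^ 2 + 2 * (a * ⟪A x, x⟫) + a ^ 2 * ‖A x‖ ^ 2 := by
    rw [norm_add_sq_real, real_inner_smul_right, real_inner_comm, norm_smul,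
      mul_pow, Real.norm_eq_abs, sq_abs]
  have h2 : ‖x - b • A x‖ ^ 2 = ‖x‖ ^ 2 - 2 * (b * ⟪A x, x⟫) + b ^ 2 * ‖A x‖ ^ 2 := by
    rw [norm_sub_sq_real, real_inner_smul_right, real_inner_comm, norm_smul,
      mul_pow, Real.norm_eq_abs, sq_abs]
  nlinarith [hA x, norm_nonneg (x - b • A x), norm_nonneg (x + a • A x)]

theorem stmt5 {E : Type*} [NormedAddCommGroup E] [InnerProductSpace ℝ E]
    [FiniteDimensional ℝ E]
    (A : E →L[ℝ] E) (hA : ∀ x : E, 0 ≤ ⟪A x, x⟫)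
    (τ σ : ℝ) (hτ : 0 < τ) (hσ : 1/2 ≤ σ)
    (y φ : ℕ → E)
    (hscheme : ∀ n : ℕ,
      τ⁻¹ • (y (n + 1) - y n) + A (σ • y (n + 1) + (1 - σ) • y n) = φ n) :
    ∀ n : ℕ, ‖y (n + 1)‖ ≤ ‖y n‖ + τ * ‖φ n‖ := by
  intro n
  set u := y n
  set v := y (n + 1)
  set a : ℝ := σ * τ with ha_def
  set b : ℝ := (1 - σ) * τ with hb_def
  have ha : 0 ≤ a := by nlinarith
  have hab : 0 < a + b := by simp [ha_def, hb_def]; nlinarith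
  have hab2 : b ^ 2 ≤ a ^ 2 := by
    simp only [ha_def, hb_def]; nlinarith [sq_nonneg τ]
  -- rewrite the scheme
  have hineq : v + a • A v = (u - b • A u) + τ • φ n := by
    have h := hscheme n
    have h' : τ • (τ⁻¹ • (v - u) + A (σ • v + (1 - σ) • u)) = τ • φ n := by rw [h]
    rw [smul_add, smul_inv_smul₀ hτ.ne'] at h'
    rw [map_add, map_smul, map_smul] at h'
    rw [← h']
    simp only [ha_def, hb_def]
    module
  -- surjectivity of I + a A
  let B : E →ₗ[ℝ] E := LinearMap.id + a • (A : E →ₗ[ℝ] E)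
  have hB : ∀ x, B x = x + a • A x := by intro x; simp [B]
  have hinj : Function.Injective B := by
    intro p q hpq
    have h0 : B (p - q) = 0 := by
      simp only [map_sub, hpq, sub_self]
    have := aux_norm_le A hA ha (p - q)
    rw [← hB, h0, norm_zero] at this
    have : ‖p - q‖ = 0 := le_antisymm this (norm_nonneg _)
    rwa [norm_eq_zero, sub_eq_zero] at this
  obtain ⟨z, hz⟩ := (LinearMap.injective_iff_surjective.mp hinj) u
  rw [hB] at hz
  -- key commutation identity
  have hcomm : u - b • A u = (z - b • A z) + a • A (z - b • A z) := by
    rw [← hz]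
    simp only [map_add, map_smul, map_sub]
    module
  set w := z - b • A z with hw_def
  have hkey : (v - w) + a • A (v - w) = τ • φ n := by
    have : v + a • A v - (w + a • A w) = τ • φ n := by
      rw [hineq, hcomm]; abel
    rw [← this]
    simp only [map_sub]
    module
  have h1 : ‖v - w‖ ≤ τ * ‖φ n‖ := by
    have := aux_norm_le A hA ha (v - w)
    rw [hkey, norm_smul, Real.norm_eq_abs, abs_of_pos hτ] at this
    exact this
  have h2 : ‖w‖ ≤ ‖u‖ := by
    have := aux_contract A hA hab hab2 z
    rwa [← hw_def, hz] at this
  calc ‖v‖ = ‖w + (v - w)‖ := by congr 1; abel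
    _ ≤ ‖w‖ + ‖v - w‖ := norm_add_le _ _
    _ ≤ ‖u‖ + τ * ‖φ n‖ := add_le_add h2 h1
end

section
/- Let A_α, α = 1,…,p, be nonnegative operators on H, τ > 0, σ ≥ 1/2. Define S̃ = (1/p) Σ_α (I + σpτA_α)⁻¹(I − (1−σ)pτA_α). Then ‖S̃‖ ≤ 1. -/
open RealInnerProductSpace Finset

/-!
Put `c = σpτ` and `d = (1 - σ)pτ`, so that `|d| ≤ c` exactly because `σ ≥ 1/2`. Each summand
`(1 + cA)⁻¹(1 - dA)` is a contraction: writing `x = (1 + cA)v`, it sends `x` to `(1 - dA)v`, and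
`‖v + cAv‖² - ‖v - dAv‖² = 2(c + d)⟪Av, v⟫ + (c² - d²)‖Av‖² ≥ 0`. An average of contractions is
a contraction.
-/

section

variable {E : Type*} [NormedAddCommGroup E] [InnerProductSpace ℝ E] {A : E →L[ℝ] E}

theorem norm_sub_smul_apply_le_norm_add_smul_apply (hA : ∀ x, 0 ≤ ⟪A x, x⟫) {c d : ℝ}
    (hcd : |d| ≤ c) (v : E) : ‖v - d • A v‖ ≤ ‖v + c • A v‖ := by
  obtain ⟨hlow, hup⟩ := abs_le.mp hcd
  have hexpand : ‖v + c • A v‖ ^ 2 - ‖v - d • A v‖ ^ 2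
      = 2 * (c + d) * ⟪A v, v⟫ + (c - d) * (c + d) * ‖A v‖ ^ 2 := by
    rw [norm_add_sq_real, norm_sub_sq_real, inner_smul_right, inner_smul_right,
      norm_smul, norm_smul, real_inner_comm, Real.norm_eq_abs, Real.norm_eq_abs, mul_pow,
      mul_pow, sq_abs, sq_abs]
    ring
  have hnonneg : 0 ≤ 2 * (c + d) * ⟪A v, v⟫ + (c - d) * (c + d) * ‖A v‖ ^ 2 :=
    add_nonneg (mul_nonneg (by linarith) (hA v))
      (mul_nonneg (mul_nonneg (by linarith) (by linarith)) (sq_nonneg _))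
  exact (sq_le_sq₀ (norm_nonneg _) (norm_nonneg _)).mp (by linarith)

theorem isUnit_one_add_smul [FiniteDimensional ℝ E] (hA : ∀ x, 0 ≤ ⟪A x, x⟫) {c : ℝ}
    (hc : 0 ≤ c) : IsUnit (1 + c • A) := by
  have hinj : Function.Injective ⇑(1 + c • A) := by
    refine (injective_iff_map_eq_zero _).mpr fun v hv => norm_le_zero_iff.mp ?_
    calc ‖v‖ ≤ ‖v + c • A v‖ := by
          simpa using norm_sub_smul_apply_le_norm_add_smul_apply hA (d := 0) (by simpa) v
      _ = 0 := by simpa using hv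
  exact ContinuousLinearMap.isUnit_iff_bijective.mpr
    ⟨hinj, LinearMap.injective_iff_surjective.mp hinj⟩

theorem norm_ringInverse_one_add_smul_mul_one_sub_smul_le_one [FiniteDimensional ℝ E]
    (hA : ∀ x, 0 ≤ ⟪A x, x⟫) {c d : ℝ} (hcd : |d| ≤ c) :
    ‖Ring.inverse (1 + c • A) * (1 - d • A)‖ ≤ 1 := by
  obtain ⟨L, hL⟩ := isUnit_one_add_smul hA ((abs_nonneg d).trans hcd)
  have hcomm : Commute (1 + c • A) (1 - d • A) :=
    (Commute.one_left _).add_left <|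
      (Commute.one_right _).sub_right <| ((Commute.refl A).smul_left c).smul_right d
  rw [← hL] at hcomm ⊢
  rw [Ring.inverse_unit, hcomm.units_inv_left.eq]
  refine ContinuousLinearMap.opNorm_le_bound _ zero_le_one fun x => ?_
  set v := (↑L⁻¹ : E →L[ℝ] E) x
  have hx : x = (L : E →L[ℝ] E) v := (DFunLike.congr_fun L.mul_inv x).symm
  conv_rhs => rw [hx]
  simpa [hL] using norm_sub_smul_apply_le_norm_add_smul_apply hA hcd v

end

theorem norm_inv_card_smul_sum_le_one {ι F : Type*} [SeminormedAddCommGroup F]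
    [NormedSpace ℝ F] (s : Finset ι) (f : ι → F) (hf : ∀ i ∈ s, ‖f i‖ ≤ 1) :
    ‖(#s : ℝ)⁻¹ • ∑ i ∈ s, f i‖ ≤ 1 := by
  rw [norm_smul, norm_inv, Real.norm_natCast]
  calc (#s : ℝ)⁻¹ * ‖∑ i ∈ s, f i‖ ≤ (#s : ℝ)⁻¹ * #s := by
        gcongr
        simpa using norm_sum_le_of_le s hf
    _ ≤ 1 := inv_mul_le_one_of_le₀ le_rfl (Nat.cast_nonneg _)

theorem stmt12_general {E : Type*} [NormedAddCommGroup E] [InnerProductSpace ℝ E]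
    [FiniteDimensional ℝ E]
    (p : ℕ) (A : Fin p → (E →L[ℝ] E))
    (hA : ∀ α, ∀ x : E, 0 ≤ ⟪A α x, x⟫)
    (τ σ : ℝ) (hτ : 0 < τ) (hσ : 1/2 ≤ σ) :
    ‖(p : ℝ)⁻¹ • ∑ α, Ring.inverse (1 + (σ * p * τ) • A α) *
        (1 - ((1 - σ) * p * τ) • A α)‖ ≤ 1 := by
  have hpτ : 0 ≤ (p : ℝ) * τ := by positivity
  have hcd : |(1 - σ) * p * τ| ≤ σ * p * τ := abs_le.mpr ⟨by nlinarith, by nlinarith⟩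
  simpa using norm_inv_card_smul_sum_le_one univ _ fun α _ =>
    norm_ringInverse_one_add_smul_mul_one_sub_smul_le_one (hA α) hcd

theorem stmt12 {E : Type*} [NormedAddCommGroup E] [InnerProductSpace ℝ E]
    [FiniteDimensional ℝ E]
    (p : ℕ) (hp : 1 ≤ p) (A : Fin p → (E →L[ℝ] E))
    (hA : ∀ α, ∀ x : E, 0 ≤ ⟪A α x, x⟫)
    (τ σ : ℝ) (hτ : 0 < τ) (hσ : 1/2 ≤ σ) :
    ‖(p : ℝ)⁻¹ • ∑ α, Ring.inverse (1 + (σ * p * τ) • A α) *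
        (1 - ((1 - σ) * p * τ) • A α)‖ ≤ 1 :=
  stmt12_general p A hA τ σ hτ hσ
end

section
/- Let A_α, α = 1,…,p, be nonnegative operators on H, τ > 0, σ ≥ 1/2. Define S̃ = ∏_{α=1}^{p} (I + στA_α)⁻¹(I − (1−σ)τA_α) (product in any fixed order). Then ‖S̃‖ ≤ 1. -/
/-!
For a monotone (accretive) `B` and `|b| ≤ a`, expanding the squares gives
`‖z - b • B z‖² = ‖z + a • B z‖² - 2 (a + b) ⟪B z, z⟫ - (a² - b²) ‖B z‖² ≤ ‖z + a • B z‖²`.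
Since `1 + a • B` and `1 - b • B` commute, this makes each factor
`(1 + στ B)⁻¹ (1 - (1 - σ)τ B)` a contraction as soon as `|1 - σ| ≤ σ`, i.e. `σ ≥ 1/2`,
and a product of contractions is a contraction.
-/

open RealInnerProductSpace

theorem List.norm_prod_le_one {α : Type*} [SeminormedRing α] (h1 : ‖(1 : α)‖ ≤ 1)
    {l : List α} (hl : ∀ a ∈ l, ‖a‖ ≤ 1) : ‖l.prod‖ ≤ 1 := by
  induction l with
  | nil => simpa using h1
  | cons a l ih =>
    rw [List.forall_mem_cons] at hl
    rw [List.prod_cons]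
    exact (norm_mul_le _ _).trans (mul_le_one₀ hl.1 (norm_nonneg _) (ih hl.2))

/-- When `P` is not a unit, `Ring.inverse P = 0` and the bound is trivial. -/
theorem norm_ringInverse_mul_le_one_of_commute {𝕜 E : Type*} [NontriviallyNormedField 𝕜]
    [NormedAddCommGroup E] [NormedSpace 𝕜 E] {P Q : E →L[𝕜] E} (hPQ : Commute P Q)
    (hle : ∀ z, ‖Q z‖ ≤ ‖P z‖) : ‖Ring.inverse P * Q‖ ≤ 1 := by
  by_cases hP : IsUnit P
  · obtain ⟨u, rfl⟩ := hP
    have hcomm : Commute Q ↑u⁻¹ := hPQ.symm.units_inv_right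
    rw [Ring.inverse_unit, ← hcomm.eq]
    refine ContinuousLinearMap.opNorm_le_bound _ zero_le_one fun y => ?_
    calc ‖Q ((↑u⁻¹ : E →L[𝕜] E) y)‖ ≤ ‖(u : E →L[𝕜] E) ((↑u⁻¹ : E →L[𝕜] E) y)‖ := hle _
      _ = 1 * ‖y‖ := by rw [← mul_apply_eq_comp, u.mul_inv, one_mul]; rfl
  · simp [Ring.inverse_non_unit _ hP]

theorem norm_sub_smul_le_norm_add_smul {E : Type*} [NormedAddCommGroup E]
    [InnerProductSpace ℝ E] {B : E →L[ℝ] E} (hB : ∀ x, 0 ≤ ⟪B x, x⟫) {a b : ℝ} (hab : |b| ≤ a)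
    (z : E) : ‖z - b • B z‖ ≤ ‖z + a • B z‖ := by
  obtain ⟨hba, hb⟩ := abs_le.mp hab
  have hsq : ‖z - b • B z‖ ^ 2 ≤ ‖z + a • B z‖ ^ 2 := by
    rw [norm_sub_sq_real, norm_add_sq_real, norm_smul, norm_smul, real_inner_smul_right,
      real_inner_smul_right, real_inner_comm, Real.norm_eq_abs, Real.norm_eq_abs, mul_pow,
      mul_pow, sq_abs, sq_abs]
    nlinarith [mul_nonneg (by linarith : 0 ≤ a + b) (hB z),
      mul_nonneg (mul_nonneg (by linarith : 0 ≤ a + b) (by linarith : 0 ≤ a - b))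
        (sq_nonneg ‖B z‖)]
  exact (sq_le_sq₀ (norm_nonneg _) (norm_nonneg _)).mp hsq

theorem norm_ringInverse_one_add_smul_mul_one_sub_smul_le_one_s13 {E : Type*}
    [NormedAddCommGroup E] [InnerProductSpace ℝ E] {B : E →L[ℝ] E} (hB : ∀ x, 0 ≤ ⟪B x, x⟫)
    {a b : ℝ} (hab : |b| ≤ a) : ‖Ring.inverse (1 + a • B) * (1 - b • B)‖ ≤ 1 := by
  have hBB : Commute (a • B) (b • B) := ((Commute.refl B).smul_left a).smul_right b
  refine norm_ringInverse_mul_le_one_of_commute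
    ((Commute.one_left _).add_left ((Commute.one_right _).sub_right hBB)) fun z => ?_
  simpa using norm_sub_smul_le_norm_add_smul hB hab z

theorem stmt13_general {E : Type*} [NormedAddCommGroup E] [InnerProductSpace ℝ E]
    (p : ℕ) (A : Fin p → (E →L[ℝ] E))
    (hA : ∀ α, ∀ x : E, 0 ≤ ⟪A α x, x⟫)
    (τ σ : ℝ) (hτ : 0 < τ) (hσ : 1/2 ≤ σ) :
    ‖(List.ofFn fun α : Fin p =>
        Ring.inverse (1 + (σ * τ) • A α) * (1 - ((1 - σ) * τ) • A α)).prod‖ ≤ 1 := by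
  have hweights : |(1 - σ) * τ| ≤ σ * τ := by
    rw [abs_mul, abs_of_pos hτ]
    exact mul_le_mul_of_nonneg_right (abs_le.mpr ⟨by linarith, by linarith⟩) hτ.le
  refine List.norm_prod_le_one ContinuousLinearMap.norm_id_le fun f hf => ?_
  obtain ⟨α, rfl⟩ := List.mem_ofFn.mp hf
  exact norm_ringInverse_one_add_smul_mul_one_sub_smul_le_one_s13 (hA α) hweights

theorem stmt13 {E : Type*} [NormedAddCommGroup E] [InnerProductSpace ℝ E]
    [FiniteDimensional ℝ E]
    (p : ℕ) (hp : 1 ≤ p) (A : Fin p → (E →L[ℝ] E))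
    (hA : ∀ α, ∀ x : E, 0 ≤ ⟪A α x, x⟫)
    (τ σ : ℝ) (hτ : 0 < τ) (hσ : 1/2 ≤ σ) :
    ‖(List.ofFn fun α : Fin p =>
        Ring.inverse (1 + (σ * τ) • A α) * (1 - ((1 - σ) * τ) • A α)).prod‖ ≤ 1 :=
  stmt13_general p A hA τ σ hτ hσ
end

section
/- Let A_α (α = 1,…,p) be nonnegative operators on H. Suppose vectors y_α^{n} satisfy the vector additive scheme (y_α^{n+1} − y_α^{n})/τ + Σ_{β≤α} A_β y_β^{n+1} + Σ_{β>α} A_β y_β^{n} = φ^{n} for all α and n. Then for 1 ≤ α ≤ p−1 the identity (I + τA_{α+1})(y_{α+1}^{n+1} − y_{α+1}^{n}) = y_α^{n+1} − y_α^{n} holds, and consequently ‖y_{α+1}^{n+1} − y_{α+1}^{n}‖ ≤ ‖y_α^{n+1} − y_α^{n}‖. -/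
open RealInnerProductSpace Finset

theorem stmt16 {E : Type*} [NormedAddCommGroup E] [InnerProductSpace ℝ E]
    [FiniteDimensional ℝ E]
    (p : ℕ) (hp : 2 ≤ p) (A : Fin p → (E →L[ℝ] E))
    (hA : ∀ α, ∀ x : E, 0 ≤ ⟪A α x, x⟫)
    (τ : ℝ) (hτ : 0 < τ) (y : Fin p → ℕ → E) (φ : ℕ → E)
    (hscheme : ∀ (α : Fin p) (n : ℕ),
      τ⁻¹ • (y α (n + 1) - y α n)
        + ∑ β ∈ univ.filter (fun β => β ≤ α), A β (y β (n + 1))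
        + ∑ β ∈ univ.filter (fun β => α < β), A β (y β n) = φ n) :
    ∀ (α : Fin p) (h : (α : ℕ) + 1 < p) (n : ℕ),
      (1 + τ • A ⟨(α : ℕ) + 1, h⟩) (y ⟨(α : ℕ) + 1, h⟩ (n + 1) - y ⟨(α : ℕ) + 1, h⟩ n)
          = y α (n + 1) - y α n ∧
        ‖y ⟨(α : ℕ) + 1, h⟩ (n + 1) - y ⟨(α : ℕ) + 1, h⟩ n‖ ≤ ‖y α (n + 1) - y α n‖ := by
  intro α h n
  set α' : Fin p := ⟨(α : ℕ) + 1, h⟩ with hα'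
  set d : E := y α (n + 1) - y α n with hd
  set d' : E := y α' (n + 1) - y α' n with hd'
  have h1 := hscheme α' n
  have h2 := hscheme α n
  -- split sums
  have hle : univ.filter (fun β : Fin p => β ≤ α') =
      insert α' (univ.filter (fun β => β ≤ α)) := by
    ext β
    simp only [mem_filter, mem_insert, mem_univ, true_and]
    constructor
    · intro hb
      rcases eq_or_lt_of_le hb with h' | h'
      · exact Or.inl h'
      · right
        have : (β : ℕ) < (α : ℕ) + 1 := h'
        exact Fin.le_def.mpr (by omega)
    · rintro (rfl | hb)
      · exact le_refl _
      · exact le_trans hb (Fin.le_def.mpr (Nat.le_succ _))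
  have hgt : univ.filter (fun β : Fin p => α < β) =
      insert α' (univ.filter (fun β => α' < β)) := by
    ext β
    simp only [mem_filter, mem_insert, mem_univ, true_and]
    constructor
    · intro hb
      have hb' : (α : ℕ) < (β : ℕ) := hb
      rcases eq_or_lt_of_le (Nat.succ_le_of_lt hb') with h' | h'
      · left; exact Fin.ext h'.symm
      · right; exact Fin.lt_def.mpr (by simp [hα']; omega)
    · rintro (rfl | hb)
      · exact Fin.lt_def.mpr (by simp [hα'])
      · exact lt_trans (Fin.lt_def.mpr (by simp [hα'])) hb
  have hnm1 : α' ∉ univ.filter (fun β : Fin p => β ≤ α) := by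
    simp only [mem_filter, mem_univ, true_and]
    intro hb
    have : (α : ℕ) + 1 ≤ (α : ℕ) := hb
    omega
  have hnm2 : α' ∉ univ.filter (fun β : Fin p => α' < β) := by
    simp only [mem_filter, mem_univ, true_and]
    exact lt_irrefl _
  rw [hle, sum_insert hnm1] at h1
  rw [hgt, sum_insert hnm2] at h2
  have h3 := h1.trans h2.symm
  have key : τ⁻¹ • d' + A α' d' = τ⁻¹ • d := by
    have hrw : (τ⁻¹ • d' + A α' d') - τ⁻¹ • d =
        (τ⁻¹ • d' + (A α' (y α' (n + 1)) +
            ∑ β ∈ univ.filter (fun β => β ≤ α), A β (y β (n + 1)))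
          + ∑ β ∈ univ.filter (fun β => α' < β), A β (y β n))
        - (τ⁻¹ • d + ∑ β ∈ univ.filter (fun β => β ≤ α), A β (y β (n + 1))
          + (A α' (y α' n) + ∑ β ∈ univ.filter (fun β => α' < β), A β (y β n))) := by
      rw [hd', map_sub]; abel
    rw [← sub_eq_zero, hrw, sub_eq_zero]
    exact h3
  have key2 : d' + τ • A α' d' = d := by
    have := congrArg (fun z => τ • z) key
    simp only [smul_add, smul_inv_smul₀ hτ.ne'] at this
    exact this
  have eq1 : (1 + τ • A α') d' = d := by
    rw [ContinuousLinearMap.add_apply, ContinuousLinearMap.one_apply,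
      ContinuousLinearMap.smul_apply]
    exact key2
  refine ⟨eq1, ?_⟩
  have hinner : 0 ≤ ⟪d', τ • A α' d'⟫ := by
    rw [real_inner_smul_right]
    exact mul_nonneg hτ.le (by rw [real_inner_comm]; exact hA α' d')
  have hsq : ‖d‖ ^ 2 = ‖d'‖ ^ 2 + 2 * ⟪d', τ • A α' d'⟫ + ‖τ • A α' d'‖ ^ 2 := by
    rw [← key2, @norm_add_sq_real]
  nlinarith [norm_nonneg d, norm_nonneg d', norm_nonneg (τ • A α' d'), sq_nonneg (‖τ • A α' d'‖)]
end

section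
/- Let A_α (α = 1,…,p) be nonnegative operators on H with A = Σ_α A_α, and let y_α^{n} satisfy the vector additive scheme (y_α^{n+1} − y_α^{n})/τ + Σ_{β≤α} A_β y_β^{n+1} + Σ_{β>α} A_β y_β^{n} = φ^{n} with initial data y_α^{0} = u⁰ for all α. Then for every α and n ≥ 1: ‖y_α^{n+1}‖ ≤ ‖y_α^{n}‖ + τ‖φ⁰ − Au⁰‖ + τ Σ_{k=1}^{n} ‖φ^{k} − φ^{k−1}‖. -/
open RealInnerProductSpace Finset

theorem stmt18 {E : Type*} [NormedAddCommGroup E] [InnerProductSpace ℝ E]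
    [FiniteDimensional ℝ E]
    (p : ℕ) (hp : 1 ≤ p) (A : Fin p → (E →L[ℝ] E))
    (hA : ∀ α, ∀ x : E, 0 ≤ ⟪A α x, x⟫)
    (τ : ℝ) (hτ : 0 < τ) (u0 : E) (y : Fin p → ℕ → E) (φ : ℕ → E)
    (hinit : ∀ α, y α 0 = u0)
    (hscheme : ∀ (α : Fin p) (n : ℕ),
      τ⁻¹ • (y α (n + 1) - y α n)
        + ∑ β ∈ univ.filter (fun β => β ≤ α), A β (y β (n + 1))
        + ∑ β ∈ univ.filter (fun β => α < β), A β (y β n) = φ n) :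
    ∀ (α : Fin p) (n : ℕ), 1 ≤ n →
      ‖y α (n + 1)‖ ≤ ‖y α n‖ + τ * ‖φ 0 - (∑ β, A β) u0‖
        + τ * ∑ k ∈ Finset.Icc 1 n, ‖φ k - φ (k - 1)‖ := by
  have h0p : 0 < p := hp
  have hτ' : τ ≠ 0 := hτ.ne'
  set w : Fin p → ℕ → E := fun α n => y α (n+1) - y α n with hw
  -- norm monotonicity
  have hmono : ∀ (γ : Fin p) (x : E), ‖x‖ ≤ ‖x + τ • A γ x‖ := by
    intro γ x
    have h1 : ‖x‖ ^ 2 ≤ ⟪x + τ • A γ x, x⟫ := by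
      rw [inner_add_left, real_inner_smul_left, real_inner_self_eq_norm_sq]
      nlinarith [hA γ x]
    have h2 := real_inner_le_norm (x + τ • A γ x) x
    nlinarith [norm_nonneg x, norm_nonneg (x + τ • A γ x)]
  -- filter splits
  have hf1 : ∀ (i : ℕ) (h : i + 1 < p),
      univ.filter (fun β : Fin p => β ≤ ⟨i+1, h⟩)
        = insert ⟨i+1, h⟩ (univ.filter (fun β : Fin p => β ≤ ⟨i, Nat.lt_of_succ_lt h⟩)) := by
    intro i h
    ext β
    simp only [mem_filter, mem_univ, true_and, mem_insert, Fin.le_def, Fin.ext_iff]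
    omega
  have hf2 : ∀ (i : ℕ) (h : i + 1 < p),
      univ.filter (fun β : Fin p => (⟨i, Nat.lt_of_succ_lt h⟩ : Fin p) < β)
        = insert ⟨i+1, h⟩ (univ.filter (fun β : Fin p => (⟨i+1, h⟩ : Fin p) < β)) := by
    intro i h
    ext β
    simp only [mem_filter, mem_univ, true_and, mem_insert, Fin.lt_def, Fin.ext_iff]
    omega
  have hnotmem1 : ∀ (i : ℕ) (h : i + 1 < p),
      (⟨i+1, h⟩ : Fin p) ∉ univ.filter (fun β : Fin p => β ≤ ⟨i, Nat.lt_of_succ_lt h⟩) := by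
    intro i h
    simp [Fin.le_def]
  have hnotmem2 : ∀ (i : ℕ) (h : i + 1 < p),
      (⟨i+1, h⟩ : Fin p) ∉ univ.filter (fun β : Fin p => (⟨i+1, h⟩ : Fin p) < β) := by
    intro i h
    simp [Fin.lt_def]
  -- the relation w_i = w_{i+1} + τ A_{i+1} w_{i+1}
  have hrel : ∀ (i : ℕ) (h : i + 1 < p) (n : ℕ),
      w ⟨i, Nat.lt_of_succ_lt h⟩ n = w ⟨i+1, h⟩ n + τ • A ⟨i+1, h⟩ (w ⟨i+1, h⟩ n) := by
    intro i h n
    have e1 := hscheme ⟨i, Nat.lt_of_succ_lt h⟩ n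
    have e2 := hscheme ⟨i+1, h⟩ n
    rw [hf2 i h, Finset.sum_insert (hnotmem2 i h)] at e1
    rw [hf1 i h, Finset.sum_insert (hnotmem1 i h)] at e2
    have e4 : τ⁻¹ • (w ⟨i, Nat.lt_of_succ_lt h⟩ n) =
        τ⁻¹ • (w ⟨i+1, h⟩ n) + A ⟨i+1, h⟩ (w ⟨i+1, h⟩ n) := by
      simp only [hw, map_sub]
      linear_combination (norm := module) e1 - e2
    have := congrArg (fun z => τ • z) e4
    simpa [smul_smul, mul_inv_cancel₀ hτ', smul_add] using this
  -- all components bounded by component 0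
  have hle0 : ∀ (i : ℕ) (h : i < p) (n : ℕ), ‖w ⟨i, h⟩ n‖ ≤ ‖w ⟨0, h0p⟩ n‖ := by
    intro i
    induction i with
    | zero => intro h n; exact le_rfl
    | succ i ih =>
      intro h n
      have h' : i < p := Nat.lt_of_succ_lt h
      calc ‖w ⟨i+1, h⟩ n‖ ≤ ‖w ⟨i+1, h⟩ n + τ • A ⟨i+1, h⟩ (w ⟨i+1, h⟩ n)‖ := hmono _ _
        _ = ‖w ⟨i, h'⟩ n‖ := by rw [← hrel i h n]
        _ ≤ ‖w ⟨0, h0p⟩ n‖ := ih h' n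
  have hp1 : p - 1 < p := Nat.sub_lt h0p one_pos
  -- telescoping sum over β > i
  have htel2 : ∀ (d i : ℕ) (h : i < p), i + d = p - 1 →
      ∀ m : ℕ, τ • ∑ β ∈ univ.filter (fun β : Fin p => (⟨i, h⟩ : Fin p) < β), A β (w β m)
        = w ⟨i, h⟩ m - w ⟨p-1, hp1⟩ m := by
    intro d
    induction d with
    | zero =>
      intro i h hi m
      have hi' : i = p - 1 := by omega
      subst hi'
      have hempty : univ.filter (fun β : Fin p => (⟨p-1, h⟩ : Fin p) < β) = ∅ := by
        rw [Finset.filter_eq_empty_iff]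
        intro β _
        have := β.isLt
        simp only [Fin.lt_def]
        omega
      rw [hempty]
      simp
    | succ d ih =>
      intro i h hi m
      have h1 : i + 1 < p := by omega
      have ihm := ih (i+1) h1 (by omega) m
      have hr := hrel i h1 m
      rw [show (⟨i, h⟩ : Fin p) = ⟨i, Nat.lt_of_succ_lt h1⟩ from rfl]
      rw [hf2 i h1, Finset.sum_insert (hnotmem2 i h1)]
      linear_combination (norm := module) ihm - hr
  -- singleton filter at index 0
  have hfz : univ.filter (fun β : Fin p => β ≤ ⟨0, h0p⟩) = {⟨0, h0p⟩} := by
    ext β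
    simp only [mem_filter, mem_univ, true_and, mem_singleton, Fin.le_def, Fin.ext_iff]
    omega
  -- multiply scheme by τ
  have hschemeτ : ∀ (n : ℕ),
      (y ⟨0, h0p⟩ (n+1) - y ⟨0, h0p⟩ n) + τ • A ⟨0, h0p⟩ (y ⟨0, h0p⟩ (n+1))
        + τ • ∑ β ∈ univ.filter (fun β : Fin p => (⟨0, h0p⟩ : Fin p) < β), A β (y β n)
        = τ • φ n := by
    intro n
    have e := hscheme ⟨0, h0p⟩ n
    rw [hfz, Finset.sum_singleton] at e
    have := congrArg (fun v => τ • v) e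
    simpa [smul_add, smul_smul, mul_inv_cancel₀ hτ', one_smul] using this
  -- key recursion
  have hkey : ∀ n : ℕ,
      w ⟨0, h0p⟩ (n+1) + τ • A ⟨0, h0p⟩ (w ⟨0, h0p⟩ (n+1))
        = w ⟨p-1, hp1⟩ n + τ • (φ (n+1) - φ n) := by
    intro n
    have e1 := hschemeτ (n+1)
    have e0 := hschemeτ n
    have ht := htel2 (p - 1) 0 h0p (by omega) n
    simp only [hw, map_sub, Finset.sum_sub_distrib, smul_sub] at ht ⊢
    linear_combination (norm := module) e1 - e0 - ht
  -- base identity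
  have hbase : w ⟨0, h0p⟩ 0 + τ • A ⟨0, h0p⟩ (w ⟨0, h0p⟩ 0)
      = τ • (φ 0 - (∑ β, A β) u0) := by
    have e := hschemeτ 0
    have herase : univ.filter (fun β : Fin p => (⟨0, h0p⟩ : Fin p) < β)
        = univ.erase ⟨0, h0p⟩ := by
      ext β
      simp only [mem_filter, mem_univ, true_and, mem_erase, and_true, Fin.lt_def, Fin.ext_iff,
        ne_eq]
      omega
    have hsum : ∑ β ∈ univ.filter (fun β : Fin p => (⟨0, h0p⟩ : Fin p) < β), A β (y β 0)
        = (∑ β, A β) u0 - A ⟨0, h0p⟩ u0 := by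
      rw [herase, Finset.sum_erase_eq_sub (mem_univ _)]
      simp only [hinit, ContinuousLinearMap.sum_apply]
    rw [hsum] at e
    simp only [hw, map_sub, hinit, smul_sub] at e ⊢
    linear_combination (norm := module) e
  -- main estimate on component 0
  have hM : ∀ n : ℕ, ‖w ⟨0, h0p⟩ n‖ ≤ τ * ‖φ 0 - (∑ β, A β) u0‖
      + τ * ∑ k ∈ Finset.Icc 1 n, ‖φ k - φ (k - 1)‖ := by
    intro n
    induction n with
    | zero =>
      have h1 : ‖w ⟨0, h0p⟩ 0‖ ≤ ‖w ⟨0, h0p⟩ 0 + τ • A ⟨0, h0p⟩ (w ⟨0, h0p⟩ 0)‖ := hmono _ _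
      rw [hbase, norm_smul, Real.norm_eq_abs, abs_of_pos hτ] at h1
      simpa using h1
    | succ n ih =>
      have h1 : ‖w ⟨0, h0p⟩ (n+1)‖
          ≤ ‖w ⟨0, h0p⟩ (n+1) + τ • A ⟨0, h0p⟩ (w ⟨0, h0p⟩ (n+1))‖ := hmono _ _
      rw [hkey n] at h1
      have h2 : ‖w ⟨p-1, hp1⟩ n + τ • (φ (n+1) - φ n)‖
          ≤ ‖w ⟨p-1, hp1⟩ n‖ + τ * ‖φ (n+1) - φ n‖ := by
        calc ‖w ⟨p-1, hp1⟩ n + τ • (φ (n+1) - φ n)‖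
            ≤ ‖w ⟨p-1, hp1⟩ n‖ + ‖τ • (φ (n+1) - φ n)‖ := norm_add_le _ _
          _ = ‖w ⟨p-1, hp1⟩ n‖ + τ * ‖φ (n+1) - φ n‖ := by
              rw [norm_smul, Real.norm_eq_abs, abs_of_pos hτ]
      have h3 := hle0 (p-1) hp1 n
      have h4 : ∑ k ∈ Finset.Icc 1 (n+1), ‖φ k - φ (k - 1)‖
          = (∑ k ∈ Finset.Icc 1 n, ‖φ k - φ (k - 1)‖) + ‖φ (n+1) - φ n‖ := by
        rw [Finset.sum_Icc_succ_top (by omega : 1 ≤ n + 1)]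
        simp
      rw [h4]
      nlinarith [h1, h2, h3, ih]
  -- conclusion
  intro α n _
  have hy : y α (n+1) = y α n + w α n := by simp [hw]
  have h5 : ‖y α (n+1)‖ ≤ ‖y α n‖ + ‖w α n‖ := by
    rw [hy]; exact norm_add_le _ _
  have h6 : ‖w α n‖ ≤ ‖w ⟨0, h0p⟩ n‖ := by
    have := hle0 α.1 α.2 n
    simpa using this
  have h7 := hM n
  linarith
end
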